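/- arXiv:1409.0120 — 2 statements merged into one kernel-verified Lean document; each statement's English description precedes it below -/
import Mathlib

section
/- In the setting of the weighted homogeneous pair (f,g), suppose in addition g(z) = β_1 z_1 + β_2 z_2^k with k ≥ 2 and β_1, β_2 ≠ 0. Then the determinant of the mixed Hessian H(fḡ) of the mixed polynomial fḡ(z) = f(z)·conj(g(z)) is not identically zero as a function on ℂ². -/
open Complex

noncomputable section

/-- The Wirtinger derivative `∂P/∂z_j` at `w`, defined via the real Fréchet derivative:
`∂P/∂z_j = (1/2)(∂P/∂x_j − i ∂P/∂y_j)`. -/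
def wD {n : ℕ} (P : (Fin n → ℂ) → ℂ) (j : Fin n) (w : Fin n → ℂ) : ℂ :=
  (1 / 2 : ℂ) *
    (fderiv ℝ P w (Pi.single j 1) - Complex.I * fderiv ℝ P w (Pi.single j Complex.I))

/-- The Wirtinger derivative `∂P/∂z̄_j` at `w`:
`∂P/∂z̄_j = (1/2)(∂P/∂x_j + i ∂P/∂y_j)`. -/
def wDbar {n : ℕ} (P : (Fin n → ℂ) → ℂ) (j : Fin n) (w : Fin n → ℂ) : ℂ :=
  (1 / 2 : ℂ) *
    (fderiv ℝ P w (Pi.single j 1) + Complex.I * fderiv ℝ P w (Pi.single j Complex.I))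

/-- `P : ℂⁿ → ℂ` is a mixed polynomial: a finite sum `Σ c_{ν,μ} z^ν (conj z)^μ`. -/
def IsMixedPoly {n : ℕ} (P : (Fin n → ℂ) → ℂ) : Prop :=
  ∃ c : ((Fin n → ℕ) × (Fin n → ℕ)) →₀ ℂ, ∀ z : Fin n → ℂ,
    P z = c.sum fun νμ a =>
      a * (∏ j, z j ^ νμ.1 j) * ∏ j, (starRingEnd ℂ) (z j) ^ νμ.2 j

/-- `w` is a singularity of `P` : the gradients (real differentials) of `Re P` and `Im P`
are linearly dependent at `w`. -/
def IsSingularity {n : ℕ} (P : (Fin n → ℂ) → ℂ) (w : Fin n → ℂ) : Prop :=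
  ∃ a b : ℝ, ¬(a = 0 ∧ b = 0) ∧
    a • fderiv ℝ (fun z => (P z).re) w + b • fderiv ℝ (fun z => (P z).im) w = 0


/-- The mixed Hessian `H(P)` of a mixed polynomial, a `2n × 2n` matrix (indexed by
`Fin n ⊕ Fin n`) with block form
`[[∂²P/∂z_j∂z_k, ∂²P/∂z_j∂z̄_k], [∂²P/∂z̄_j∂z_k, ∂²P/∂z̄_j∂z̄_k]]`. -/
def mixedHessian {n : ℕ} (P : (Fin n → ℂ) → ℂ) (w : Fin n → ℂ) :
    Matrix (Fin n ⊕ Fin n) (Fin n ⊕ Fin n) ℂ :=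
  Matrix.of fun a b =>
    match a, b with
    | Sum.inl j, Sum.inl k => wD (fun z => wD P k z) j w
    | Sum.inl j, Sum.inr k => wD (fun z => wDbar P k z) j w
    | Sum.inr j, Sum.inl k => wDbar (fun z => wD P k z) j w
    | Sum.inr j, Sum.inr k => wDbar (fun z => wDbar P k z) j w

/-- The real coordinate directions of `ℂⁿ ≅ ℝ^{2n}`: `inl j ↦ x_j`-direction,
`inr j ↦ y_j`-direction. -/
def dirC {n : ℕ} : (Fin n ⊕ Fin n) → (Fin n → ℂ)
  | Sum.inl j => Pi.single j 1
  | Sum.inr j => Pi.single j Complex.I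

/-- The real Hessian `H_ℝ(η)` of `η : ℂⁿ ≅ ℝ^{2n} → ℝ` in the coordinates
`(x_1,…,x_n,y_1,…,y_n)`. -/
def realHessian {n : ℕ} (η : (Fin n → ℂ) → ℝ) (w : Fin n → ℂ) :
    Matrix (Fin n ⊕ Fin n) (Fin n ⊕ Fin n) ℝ :=
  Matrix.of fun a b => fderiv ℝ (fun z => fderiv ℝ η z (dirC b)) w (dirC a)

/-!
Weighted homogeneity of `g = β₁z₁ + β₂z₂ᵏ` forces `p = n = 1` and `k = q`, so `f` has weights
`(q, 1)` and degree `qm`. Since `∂g/∂z₁ = β₁` is constant, the mixed Hessian of `fḡ` has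
determinant `-f · Q(f) · ḡ · β̄₁² · conj(∂²g/∂z₂²)`, where
`Q(f) = f₁² f₂₂ - 2 f₁ f₂ f₁₂ + f₂² f₁₁`, and it remains to see that `Q(f) ≢ 0`.

If `Q(f) = 0`, Euler's identity for the weights `(q, 1)` turns `Q(f)(x, 1) = 0` into the ODE
`q²m² φ² φ'' = q(q-1) x φ'³ + qm(qm-2q+1) φ φ'²` for `φ(x) = f(x, 1)`. The polynomial `φ` has
degree `m > 0` and `φ(0) = a₂ ≠ 0`, so it has a root `r ≠ 0`. At `r` the term `x φ'³` vanishes to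
strictly lower order than the other two, which forces `q(q-1) r = 0`.
-/

namespace Polynomial

lemma X_sub_C_mul_derivative_X_sub_C_pow {R : Type*} [CommRing R] (r : R) (n : ℕ) :
    (X - C r) * derivative ((X - C r) ^ n) = C (n : R) * (X - C r) ^ n := by
  cases n with
  | zero => simp
  | succ n => rw [derivative_X_sub_C_pow, Nat.add_sub_cancel]; ring

/-- If `r` is a root of multiplicity `ν + 1`, then `φ' = (X - r)^ν τ` with `τ(r) ≠ 0`, so
`b φ'³ = (X - r)^(3ν) b τ³`, while `(X - r)^(3ν+1)` divides `a φ² φ''` and `c φ φ'²`. -/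
theorem IsRoot.eval_eq_zero_of_mul_sq_derivative_derivative {R : Type*} [CommRing R]
    [IsDomain R] [CharZero R] {φ a b c : R[X]} {r : R} (hφ : φ ≠ 0) (hr : φ.IsRoot r)
    (h : a * φ ^ 2 * derivative (derivative φ) =
      b * derivative φ ^ 3 + c * φ * derivative φ ^ 2) :
    b.eval r = 0 := by
  obtain ⟨ρ, hfac, hρ⟩ := φ.exists_eq_pow_rootMultiplicity_mul_and_not_dvd hφ r
  obtain ⟨ν, hν⟩ : ∃ ν, φ.rootMultiplicity r = ν + 1 :=
    Nat.exists_eq_add_one.mpr ((rootMultiplicity_pos hφ).mpr hr)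
  rw [hν] at hfac
  set s : R[X] := X - C r
  set τ : R[X] := C ((ν : R) + 1) * ρ + s * derivative ρ
  have hτ : τ.eval r ≠ 0 := by
    have hν₁ : (ν : R) + 1 ≠ 0 := by exact_mod_cast Nat.succ_ne_zero ν
    simpa [τ, s, dvd_iff_isRoot] using And.intro hν₁ hρ
  have hφ' : derivative φ = s ^ ν * τ := by
    rw [hfac, derivative_mul, derivative_X_sub_C_pow]
    simp only [τ, s]
    push_cast
    ring
  have hφ'' : s * derivative (derivative φ) = s ^ ν * (C (ν : R) * τ + s * derivative τ) := by
    rw [hφ', derivative_mul, mul_add, ← mul_assoc, X_sub_C_mul_derivative_X_sub_C_pow]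
    ring
  have hcancel : s ^ (3 * ν + 1) * (s * (a * ρ ^ 2 * (C (ν : R) * τ + s * derivative τ))) =
      s ^ (3 * ν + 1) * (b * τ ^ 3 + s * (c * ρ * τ ^ 2)) :=
    calc _ = a * φ ^ 2 * (s * derivative (derivative φ)) := by rw [hφ'', hfac]; ring
      _ = s * (b * derivative φ ^ 3 + c * φ * derivative φ ^ 2) := by rw [← h]; ring
      _ = _ := by rw [hφ', hfac]; ring
  simpa [s, hτ] using
    congrArg (eval r) (mul_left_cancel₀ (pow_ne_zero _ (X_sub_C_ne_zero r)) hcancel)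

end Polynomial

namespace MvPolynomial

open scoped Polynomial

open Polynomial (derivative)

section CommRing

variable {R σ : Type*} [CommRing R]

lemma pderiv_pderiv_comm (i j : σ) (φ : MvPolynomial σ R) :
    pderiv i (pderiv j φ) = pderiv j (pderiv i φ) := by
  classical
  induction φ using MvPolynomial.induction_on with
  | C a => simp
  | add p r hp hr => simp [hp, hr]
  | mul_X p l hp =>
    simp only [pderiv_mul, map_add, hp, pderiv_X, Pi.single_apply]
    split_ifs <;> simp; ring

lemma coeff_aeval_C_mul_X [Fintype σ] (a : σ → R) (φ : MvPolynomial σ R) (d : σ →₀ ℕ) :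
    coeff d (aeval (fun i => C (a i) * X i) φ) = (∏ i, a i ^ d i) * coeff d φ := by
  classical
  induction φ using MvPolynomial.induction_on' with
  | monomial e r =>
    have hmonomial : aeval (fun i => C (a i) * X i) (monomial e r) =
        monomial e (r * ∏ i, a i ^ e i) := by
      simp only [aeval_monomial, mul_pow, Finsupp.prod_mul, ← map_pow, ← map_finsuppProd]
      rw [Finsupp.prod_fintype e (fun i k => a i ^ k) (fun _ => pow_zero _), algebraMap_eq,
        monomial_eq, C_mul]
      ring
    rw [hmonomial, coeff_monomial, coeff_monomial]
    split_ifs with h <;> simp [h, mul_comm]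
  | add p r hp hr => rw [map_add, coeff_add, coeff_add, hp, hr, mul_add]

lemma derivative_aeval [Fintype σ] (v : σ → R[X]) (φ : MvPolynomial σ R) :
    derivative (aeval v φ) = ∑ i, aeval v (pderiv i φ) * derivative (v i) := by
  classical
  induction φ using MvPolynomial.induction_on with
  | C a => simp
  | add p r hp hr => simp [hp, hr, add_mul, Finset.sum_add_distrib]
  | mul_X p i hp =>
    simp [hp, pderiv_X, add_mul, Finset.sum_add_distrib, Finset.sum_mul, Pi.single_apply,
      apply_ite (aeval v), ite_mul]
    rw [add_comm]
    exact congrArg₂ _ rfl (Finset.sum_congr rfl fun _ _ => by ring)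

lemma weights_of_isWeightedHomogeneous_C_mul_X_add_C_mul_X_pow {β₁ β₂ : R} {q p D k : ℕ}
    (hβ₁ : β₁ ≠ 0) (hβ₂ : β₂ ≠ 0) (hk : k ≠ 0)
    (h : (C β₁ * X 0 + C β₂ * X 1 ^ k : MvPolynomial (Fin 2) R).IsWeightedHomogeneous ![q, p] D) :
    q = D ∧ k * p = D := by
  have hweight₀ := h (d := Finsupp.single 0 1) (by
    simp [coeff_X, X_pow_eq_monomial, coeff_monomial, Finsupp.single_eq_single_iff, hβ₁])
  have hweight₁ := h (d := Finsupp.single 1 k) (by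
    simp [coeff_X, X_pow_eq_monomial, coeff_monomial, Finsupp.single_eq_single_iff, hk, hβ₂])
  simp only [Finsupp.weight_single, smul_eq_mul, Matrix.cons_val_zero, Matrix.cons_val_one,
    one_mul] at hweight₀ hweight₁
  exact ⟨hweight₀, hweight₁⟩

/-- `f(x, y) ↦ f(x, 1)`. -/
def dehomogenize : MvPolynomial (Fin 2) R →ₐ[R] R[X] :=
  aeval ![Polynomial.X, 1]

lemma dehomogenize_X_zero : dehomogenize (X 0 : MvPolynomial (Fin 2) R) = Polynomial.X := by
  simp [dehomogenize]

lemma dehomogenize_X_one : dehomogenize (X 1 : MvPolynomial (Fin 2) R) = 1 := by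
  simp [dehomogenize]

lemma derivative_dehomogenize (φ : MvPolynomial (Fin 2) R) :
    derivative (dehomogenize φ) = dehomogenize (pderiv 0 φ) := by
  simp [dehomogenize, derivative_aeval, Fin.sum_univ_two]

lemma coeff_dehomogenize {φ : MvPolynomial (Fin 2) R} {q D : ℕ}
    (hφ : φ.IsWeightedHomogeneous ![q, 1] D) {t : ℕ} (ht : q * t ≤ D) :
    (dehomogenize φ).coeff t = coeff (Finsupp.single 0 t + Finsupp.single 1 (D - q * t)) φ := by
  classical
  conv_lhs => rw [φ.as_sum, map_sum, Polynomial.finsetSum_coeff]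
  have hterm (d : Fin 2 →₀ ℕ) : (dehomogenize (monomial d (coeff d φ))).coeff t =
      if d 0 = t then coeff d φ else 0 := by
    simp [dehomogenize, aeval_monomial, Finsupp.prod_fintype, Polynomial.coeff_X_pow, eq_comm]
  simp only [hterm]
  rw [Finset.sum_eq_single (Finsupp.single 0 t + Finsupp.single 1 (D - q * t))]
  · simp
  · intro d _ hne
    refine ite_eq_right_iff.mpr fun hdt => by_contra fun hd => hne ?_
    subst hdt
    have hweight := hφ hd
    simp only [Finsupp.weight_eq_sum, Fin.sum_univ_two, Matrix.cons_val_zero,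
      Matrix.cons_val_one, smul_eq_mul, mul_one, mul_comm (d 0)] at hweight
    ext i
    fin_cases i <;> simp; omega
  · intro h
    exact if_pos (by simp) |>.trans (notMem_support_iff.mp h)

/-- Minus the determinant of the bordered Hessian `[[0, f₀, f₁], [f₀, f₀₀, f₀₁], [f₁, f₀₁, f₁₁]]`. -/
def curvatureNumerator (f : MvPolynomial (Fin 2) R) : MvPolynomial (Fin 2) R :=
  pderiv 0 f ^ 2 * pderiv 1 (pderiv 1 f) - 2 * pderiv 0 f * pderiv 1 f * pderiv 0 (pderiv 1 f)
    + pderiv 1 f ^ 2 * pderiv 0 (pderiv 0 f)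

lemma dehomogenize_ode_of_curvatureNumerator_eq_zero {f : MvPolynomial (Fin 2) R} {q m : ℕ}
    (hf : f.IsWeightedHomogeneous ![q, 1] (q * m)) (hQ : curvatureNumerator f = 0) :
    ((q : R[X]) * (m : R[X])) ^ 2 * dehomogenize f ^ 2 * derivative (derivative (dehomogenize f)) =
      (q : R[X]) * ((q : R[X]) - 1) * Polynomial.X * derivative (dehomogenize f) ^ 3 +
        (q : R[X]) * (m : R[X]) * ((q : R[X]) * (m : R[X]) - 2 * (q : R[X]) + 1) *
          dehomogenize f * derivative (dehomogenize f) ^ 2 := by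
  have hEuler := hf.sum_weight_X_mul_pderiv
  simp only [Fin.sum_univ_two, Matrix.cons_val_zero, Matrix.cons_val_one, one_smul] at hEuler
  have hEuler₁ := congrArg (pderiv 1) hEuler
  simp only [map_add, map_nsmul, pderiv_mul, pderiv_X_self, pderiv_X_of_ne zero_ne_one,
    zero_mul, zero_add, one_mul] at hEuler₁
  rw [pderiv_pderiv_comm 1 0] at hEuler₁
  have h₁ := congrArg dehomogenize hEuler
  have h₃ := congrArg dehomogenize hEuler₁
  have hQ' := congrArg dehomogenize hQ
  simp only [curvatureNumerator, map_add, map_sub, map_mul, map_pow, map_natCast, map_ofNat,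
    map_zero, dehomogenize_X_zero, dehomogenize_X_one, ← derivative_dehomogenize,
    nsmul_eq_mul, Nat.cast_mul, one_mul] at h₁ h₃ hQ'
  have h₁' := congrArg derivative h₁
  simp only [Polynomial.derivative_add, Polynomial.derivative_mul, Polynomial.derivative_natCast,
    Polynomial.derivative_X, zero_mul, zero_add, one_mul] at h₁'
  set φ := dehomogenize f
  set ψ := dehomogenize (pderiv 1 f)
  linear_combination hQ' - derivative φ ^ 2 * h₃
    + (2 * derivative φ * ψ + q * Polynomial.X * derivative φ ^ 2) * h₁'
    - (derivative (derivative φ) * (2 * q * m * φ + (q * Polynomial.X * derivative φ + ψ - q * m * φ))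
      - (q * m - 2 * q + 1) * derivative φ ^ 2) * h₁

end CommRing

lemma isWeightedHomogeneous_of_eval_smul {K σ : Type*} [Field K] [CharZero K] [Fintype σ]
    {φ : MvPolynomial σ K} {w : σ → ℕ} {D : ℕ}
    (h : ∀ c : K, c ≠ 0 → ∀ z : σ → K, eval (fun i => c ^ w i * z i) φ = c ^ D * eval z φ) :
    φ.IsWeightedHomogeneous w D := by
  intro d hd
  have hscale : aeval (fun i => C (2 ^ w i) * X i) φ = C (2 ^ D) * φ :=
    MvPolynomial.funext fun z => by
      change aeval z (aeval _ φ) = aeval z (C _ * φ)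
      rw [aeval_eq_bind₁, aeval_bind₁]
      simp [h 2 two_ne_zero]
  have hcoeff := congrArg (coeff d) hscale
  rw [coeff_aeval_C_mul_X, coeff_C_mul] at hcoeff
  have hpow : (2 : K) ^ Finsupp.weight w d = 2 ^ D := by
    rw [Finsupp.weight_eq_sum, ← mul_right_cancel₀ hd hcoeff]
    simp [← pow_mul, ← Finset.prod_pow_eq_pow_sum, mul_comm]
  exact Nat.pow_right_injective le_rfl (by exact_mod_cast hpow)

lemma curvatureNumerator_ne_zero {K : Type*} [Field K] [IsAlgClosed K] [CharZero K]
    {f : MvPolynomial (Fin 2) K} {q m : ℕ} (hf : f.IsWeightedHomogeneous ![q, 1] (q * m))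
    (hq : 2 ≤ q) (hm : 0 < m) (ha₁ : coeff (Finsupp.single 0 m) f ≠ 0)
    (ha₂ : coeff (Finsupp.single 1 (q * m)) f ≠ 0) :
    curvatureNumerator f ≠ 0 := by
  intro hQ
  have htop : (dehomogenize f).coeff m ≠ 0 := by
    simpa [coeff_dehomogenize hf le_rfl] using ha₁
  have hbot : (dehomogenize f).eval 0 ≠ 0 := by
    simpa [← Polynomial.coeff_zero_eq_eval_zero, coeff_dehomogenize hf (t := 0) (by simp)]
      using ha₂
  obtain ⟨r, hr⟩ := IsAlgClosed.exists_root (dehomogenize f) fun h =>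
    hm.ne' (by simpa [h] using Polynomial.le_degree_of_ne_zero htop)
  have hr₀ : r ≠ 0 := by rintro rfl; exact hbot hr
  have hqr := hr.eval_eq_zero_of_mul_sq_derivative_derivative (fun h => by simp [h] at htop)
    (dehomogenize_ode_of_curvatureNumerator_eq_zero hf hQ)
  simp [sub_eq_zero, hr₀] at hqr
  omega

variable {𝕜 σ : Type*} [NontriviallyNormedField 𝕜] [Fintype σ]

def evalFDeriv (φ : MvPolynomial σ 𝕜) (w : σ → 𝕜) : (σ → 𝕜) →L[𝕜] 𝕜 :=
  ∑ j, eval w (pderiv j φ) • ContinuousLinearMap.proj j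

lemma evalFDeriv_apply (φ : MvPolynomial σ 𝕜) (w v : σ → 𝕜) :
    evalFDeriv φ w v = ∑ j, eval w (pderiv j φ) * v j := by
  simp [evalFDeriv]

lemma evalFDeriv_single [DecidableEq σ] (φ : MvPolynomial σ 𝕜) (w : σ → 𝕜) (j : σ) (c : 𝕜) :
    evalFDeriv φ w (Pi.single j c) = eval w (pderiv j φ) * c := by
  simp [evalFDeriv_apply, Pi.single_apply]

lemma hasFDerivAt_eval (φ : MvPolynomial σ 𝕜) (w : σ → 𝕜) :
    HasFDerivAt (fun z => eval z φ) (evalFDeriv φ w) w := by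
  classical
  induction φ using MvPolynomial.induction_on with
  | C a =>
    have hzero : evalFDeriv (C a) w = 0 := by ext v; simp [evalFDeriv_apply]
    simp only [hzero, eval_C]
    exact hasFDerivAt_const a w
  | add p r hp hr =>
    have hadd : evalFDeriv (p + r) w = evalFDeriv p w + evalFDeriv r w := by
      ext v; simp [evalFDeriv_apply, add_mul, Finset.sum_add_distrib]
    simp only [hadd, map_add]
    exact hp.add hr
  | mul_X p i hp =>
    have hmul : evalFDeriv (p * X i) w =
        eval w p • ContinuousLinearMap.proj i + w i • evalFDeriv p w := by
      ext v
      simp [evalFDeriv_apply, pderiv_X, Pi.single_apply, add_mul, Finset.sum_add_distrib,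
        Finset.mul_sum, apply_ite (eval w), ite_mul, mul_assoc]
    simp only [hmul, map_mul, eval_X]
    exact hp.mul (ContinuousLinearMap.proj i : (σ → 𝕜) →L[𝕜] 𝕜).hasFDerivAt

end MvPolynomial

open MvPolynomial ComplexConjugate

section MixedHessian

variable {n : ℕ} (φ ψ : MvPolynomial (Fin n) ℂ) (w : Fin n → ℂ)

lemma fderiv_eval_mul_conj_apply (v : Fin n → ℂ) :
    fderiv ℝ (fun z => eval z φ * conj (eval z ψ)) w v =
      eval w φ * conj (evalFDeriv ψ w v) + conj (eval w ψ) * evalFDeriv φ w v := by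
  have hψ := (conjCLE.toContinuousLinearMap.hasFDerivAt (x := eval w ψ)).comp w
    ((hasFDerivAt_eval ψ w).restrictScalars ℝ)
  have h : HasFDerivAt (fun z => eval z φ * conj (eval z ψ)) _ w :=
    ((hasFDerivAt_eval φ w).restrictScalars ℝ).mul hψ
  rw [h.fderiv]
  simp

lemma wD_eval_mul_conj (j : Fin n) :
    wD (fun z => eval z φ * conj (eval z ψ)) j w = eval w (pderiv j φ) * conj (eval w ψ) := by
  simp only [wD, fderiv_eval_mul_conj_apply, evalFDeriv_single, map_mul, conj_I, map_one]
  ring_nf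
  simp [I_sq]
  ring

lemma wDbar_eval_mul_conj (j : Fin n) :
    wDbar (fun z => eval z φ * conj (eval z ψ)) j w = eval w φ * conj (eval w (pderiv j ψ)) := by
  simp only [wDbar, fderiv_eval_mul_conj_apply, evalFDeriv_single, map_mul, conj_I, map_one]
  ring_nf
  simp [I_sq]
  ring

lemma mixedHessian_eval_mul_conj :
    mixedHessian (fun z => eval z φ * conj (eval z ψ)) w = Matrix.fromBlocks
      (.of fun j k => eval w (pderiv j (pderiv k φ)) * conj (eval w ψ))
      (.of fun j k => eval w (pderiv j φ) * conj (eval w (pderiv k ψ)))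
      (.of fun j k => eval w (pderiv k φ) * conj (eval w (pderiv j ψ)))
      (.of fun j k => eval w φ * conj (eval w (pderiv j (pderiv k ψ)))) := by
  ext (j | j) (k | k) <;> simp [mixedHessian, wD_eval_mul_conj, wDbar_eval_mul_conj]

end MixedHessian

lemma det_mixedHessian_eval_mul_conj {φ ψ : MvPolynomial (Fin 2) ℂ} {β : ℂ}
    (hψ : pderiv 0 ψ = C β) (w : Fin 2 → ℂ) :
    (mixedHessian (fun z => eval z φ * conj (eval z ψ)) w).det =
      -(eval w (φ * curvatureNumerator φ) *
        conj (eval w ψ * β ^ 2 * eval w (pderiv 1 (pderiv 1 ψ)))) := by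
  let e : Fin 4 ≃ Fin 2 ⊕ Fin 2 := (finSumFinEquiv (m := 2) (n := 2)).symm
  have he : ⇑e = ![.inl 0, .inl 1, .inr 0, .inr 1] := by
    funext i; fin_cases i <;> rfl
  rw [mixedHessian_eval_mul_conj, ← Matrix.det_submatrix_equiv_self e, he,
    Matrix.det_succ_row_zero]
  simp only [Fin.sum_univ_four, Matrix.det_fin_three, Matrix.submatrix_apply]
  have hψ₀₁ : pderiv 0 (pderiv 1 ψ) = 0 := by rw [pderiv_pderiv_comm, hψ, pderiv_C]
  simp [Fin.succAbove, Fin.lt_def, curvatureNumerator, hψ, hψ₀₁, pderiv_pderiv_comm (1 : Fin 2) 0]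
  ring

lemma exists_det_mixedHessian_ne_zero {φ ψ : MvPolynomial (Fin 2) ℂ} {β : ℂ}
    (hψ : pderiv 0 ψ = C β) (hβ : β ≠ 0) (hφ : curvatureNumerator φ ≠ 0)
    (hψ₁₁ : pderiv 1 (pderiv 1 ψ) ≠ 0) :
    ∃ w, (mixedHessian (fun z => eval z φ * conj (eval z ψ)) w).det ≠ 0 := by
  have hφ₀ : φ ≠ 0 := by rintro rfl; simp [curvatureNumerator] at hφ
  have hψ₀ : ψ ≠ 0 := by
    rintro rfl
    rw [map_zero, eq_comm, C_eq_zero] at hψ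
    exact hβ hψ
  have hprod : φ * curvatureNumerator φ * (ψ * C β * pderiv 1 (pderiv 1 ψ)) ≠ 0 := by
    simp [hφ₀, hφ, hψ₀, hβ, hψ₁₁]
  obtain ⟨w, hw⟩ :
      ∃ w, eval w (φ * curvatureNumerator φ * (ψ * C β * pderiv 1 (pderiv 1 ψ))) ≠ 0 := by
    by_contra! h
    exact hprod (MvPolynomial.funext fun w => by simpa using h w)
  refine ⟨w, ?_⟩
  rw [det_mixedHessian_eval_mul_conj hψ]
  simpa [hβ, and_assoc] using hw

theorem stmt_9_general (p q m n : ℕ) (hq : 0 < q) (hm : 0 < m)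
    (f g : MvPolynomial (Fin 2) ℂ)
    (hf : ∀ c : ℂ, c ≠ 0 → ∀ z : Fin 2 → ℂ,
      MvPolynomial.eval ![c ^ q * z 0, c ^ p * z 1] f =
        c ^ (p * q * m) * MvPolynomial.eval z f)
    (hg : ∀ c : ℂ, c ≠ 0 → ∀ z : Fin 2 → ℂ,
      MvPolynomial.eval ![c ^ q * z 0, c ^ p * z 1] g =
        c ^ (p * q * n) * MvPolynomial.eval z g)
    (ha₁ : MvPolynomial.coeff (Finsupp.single 0 (p * m)) f ≠ 0)
    (ha₂ : MvPolynomial.coeff (Finsupp.single 1 (q * m)) f ≠ 0)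
    (F : (Fin 2 → ℂ) → ℂ)
    (hF : F = fun z => MvPolynomial.eval z f * (starRingEnd ℂ) (MvPolynomial.eval z g))
    (k : ℕ) (hk : 2 ≤ k) (β₁ β₂ : ℂ) (hβ₁ : β₁ ≠ 0) (hβ₂ : β₂ ≠ 0)
    (hgform : g = MvPolynomial.C β₁ * MvPolynomial.X 0 +
      MvPolynomial.C β₂ * MvPolynomial.X 1 ^ k) :
    ∃ w : Fin 2 → ℂ, (mixedHessian F w).det ≠ 0 := by
  have hscale (a b : ℕ) (c : ℂ) (z : Fin 2 → ℂ) :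
      (fun i => c ^ (![a, b] : Fin 2 → ℕ) i * z i) = ![c ^ a * z 0, c ^ b * z 1] := by
    ext i; fin_cases i <;> rfl
  have hfw : f.IsWeightedHomogeneous ![q, p] (p * q * m) :=
    isWeightedHomogeneous_of_eval_smul fun c hc z => by rw [hscale]; exact hf c hc z
  have hgw : g.IsWeightedHomogeneous ![q, p] (p * q * n) :=
    isWeightedHomogeneous_of_eval_smul fun c hc z => by rw [hscale]; exact hg c hc z
  obtain ⟨hweight₀, hweight₁⟩ := weights_of_isWeightedHomogeneous_C_mul_X_add_C_mul_X_pow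
    hβ₁ hβ₂ (by omega) (hgform ▸ hgw)
  obtain ⟨rfl, rfl⟩ : p = 1 ∧ n = 1 := mul_eq_one.mp <|
    Nat.eq_of_mul_eq_mul_left hq (by linarith [show q * (p * n) = p * q * n by ring])
  obtain rfl : k = q := by simpa using hweight₁
  have hg₀ : pderiv 0 g = C β₁ := by simp [hgform]
  have hg₁₁ : pderiv 1 (pderiv 1 g) ≠ 0 := by
    intro h
    -- at `(0, 1)` it equals `q (q - 1) β₂`
    have := congrArg (eval ![0, 1]) h
    simp [hgform, hβ₂] at this
    omega
  obtain ⟨w, hw⟩ := exists_det_mixedHessian_ne_zero hg₀ hβ₁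
    (curvatureNumerator_ne_zero (by simpa using hfw) hk hm (by simpa using ha₁) ha₂) hg₁₁
  exact ⟨w, hF ▸ hw⟩

/-- In the weighted homogeneous setting, if `g(z) = β₁z₁ + β₂z₂^k` with `k ≥ 2`, the
determinant of the mixed Hessian of `fḡ` is not identically zero on `ℂ²`. -/
theorem stmt_9 (p q m n : ℕ) (hp : 0 < p) (hq : 0 < q) (hm : 0 < m) (hn : 0 < n)
    (hmn : n < m) (hpq : p ≤ q)
    (f g : MvPolynomial (Fin 2) ℂ)
    (hf : ∀ c : ℂ, c ≠ 0 → ∀ z : Fin 2 → ℂ,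
      MvPolynomial.eval ![c ^ q * z 0, c ^ p * z 1] f =
        c ^ (p * q * m) * MvPolynomial.eval z f)
    (hg : ∀ c : ℂ, c ≠ 0 → ∀ z : Fin 2 → ℂ,
      MvPolynomial.eval ![c ^ q * z 0, c ^ p * z 1] g =
        c ^ (p * q * n) * MvPolynomial.eval z g)
    (ha₁ : MvPolynomial.coeff (Finsupp.single 0 (p * m)) f ≠ 0)
    (ha₂ : MvPolynomial.coeff (Finsupp.single 1 (q * m)) f ≠ 0)
    (hb₁ : MvPolynomial.coeff (Finsupp.single 0 (p * n)) g ≠ 0)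
    (hb₂ : MvPolynomial.coeff (Finsupp.single 1 (q * n)) g ≠ 0)
    (F : (Fin 2 → ℂ) → ℂ)
    (hF : F = fun z => MvPolynomial.eval z f * (starRingEnd ℂ) (MvPolynomial.eval z g))
    (hsing0 : IsSingularity F 0)
    (hiso : ∃ ε : ℝ, 0 < ε ∧ ∀ w : Fin 2 → ℂ, w ≠ 0 → ‖w‖ < ε → ¬ IsSingularity F w)
    (k : ℕ) (hk : 2 ≤ k) (β₁ β₂ : ℂ) (hβ₁ : β₁ ≠ 0) (hβ₂ : β₂ ≠ 0)
    (hgform : g = MvPolynomial.C β₁ * MvPolynomial.X 0 +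
      MvPolynomial.C β₂ * MvPolynomial.X 1 ^ k) :
    ∃ w : Fin 2 → ℂ, (mixedHessian F w).det ≠ 0 :=
  stmt_9_general p q m n hq hm f g hf hg ha₁ ha₂ F hF k hk β₁ β₂ hβ₁ hβ₂ hgform

end
end

section
/- In the setting of the weighted homogeneous pair (f,g), let h(z) = γ_1 z_1^{p(m−n)} + γ_2 z_2^{q(m−n)} with γ_1, γ_2 ∈ ℂ∖{0}, let ℓ(z) = c_1 z_1 + c_2 z_2 with c_1, c_2 ∈ ℂ∖{0}, let t, s > 0 and F_{t,s} = fḡ + t·h + s·ℓ. If all Wirtinger derivatives of F_{t,s} vanish at a point w = (w_1,w_2) ∈ ℂ², then f(w)·conj(g(w)) = 0 and t·pq(m−n)·h(w) + s·(q·c_1·w_1 + p·c_2·w_2) = 0. In particular, if the zero sets {z : f(z)·g(z) = 0} and {z : t·pq(m−n)·h(z) + s·(q c_1 z_1 + p c_2 z_2) = 0} intersect in only finitely many points, then S_2(F_{t,s}) is a finite set. -/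
open Complex

noncomputable section

/-! At a point where every Wirtinger derivative of `F` vanishes, the real differential of `F`
vanishes. For holomorphic `A`, `B`, `G` the differential of `A · conj B + G` is the sum of the
`ℂ`-linear map `conj (B w) · dA + dG` and the antilinear map `A w · conj dB`; testing on `u` and
`I • u` shows that both vanish. Evaluated on the weighted Euler vector `(q w₁, p w₂)`, Euler's
identity `dP (q w₁, p w₂) = deg P · P w` turns the antilinear part into `pqn · f(w) conj g(w) = 0`
and then the linear part into `t · pq(m − n) · h(w) + s · (q c₁ w₁ + p c₂ w₂) = 0`. The finiteness
claim follows since `S₂(F)` lies in the intersection of the two zero sets. -/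

open ComplexConjugate

theorem differentiableAt_mvPolynomial_eval {σ : Type*} [Fintype σ] (f : MvPolynomial σ ℂ)
    (w : σ → ℂ) :
    DifferentiableAt ℂ (fun z => MvPolynomial.eval z f) w :=
  (AnalyticOnNhd.eval_mvPolynomial f w trivial).differentiableAt

theorem fderiv_eq_zero_of_wD_eq_zero_of_wDbar_eq_zero {n : ℕ} {P : (Fin n → ℂ) → ℂ}
    {w : Fin n → ℂ} (hP : ∀ j, wD P j w = 0 ∧ wDbar P j w = 0) : fderiv ℝ P w = 0 := by
  have hsingle (j : Fin n) :
      fderiv ℝ P w (Pi.single j 1) = 0 ∧ fderiv ℝ P w (Pi.single j I) = 0 := by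
    obtain ⟨h₁, h₂⟩ := hP j
    rw [wD] at h₁
    rw [wDbar] at h₂
    exact ⟨by linear_combination h₁ + h₂,
      by linear_combination I * (h₁ - h₂) + fderiv ℝ P w (Pi.single j I) * I_sq⟩
  refine ContinuousLinearMap.coe_injective (LinearMap.pi_ext fun j x => ?_)
  have hx : (Pi.single j x : Fin n → ℂ) =
      x.re • (Pi.single j 1 : Fin n → ℂ) + x.im • (Pi.single j I : Fin n → ℂ) := by
    rw [← Pi.single_smul', ← Pi.single_smul', ← Pi.single_add]
    simp [Complex.re_add_im]
  simp [hx, (hsingle j).1, (hsingle j).2]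

theorem mul_conj_add_fderiv_eq_zero {E : Type*} [NormedAddCommGroup E] [NormedSpace ℂ E]
    {A B G : E → ℂ} {w : E} (hA : DifferentiableAt ℂ A w) (hB : DifferentiableAt ℂ B w)
    (hG : DifferentiableAt ℂ G w) (hF : fderiv ℝ (fun z => A z * conj (B z) + G z) w = 0)
    (u : E) :
    A w * conj (fderiv ℂ B w u) = 0 ∧ conj (B w) * fderiv ℂ A w u + fderiv ℂ G w u = 0 := by
  have hFd : HasFDerivAt (fun z => A z * conj (B z) + G z) _ w :=
    ((hA.hasFDerivAt.restrictScalars ℝ).mul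
      (hB.hasFDerivAt.restrictScalars ℝ).star).add (hG.hasFDerivAt.restrictScalars ℝ)
  have happly (v : E) : A w * conj (fderiv ℂ B w v) + conj (B w) * fderiv ℂ A w v
      + fderiv ℂ G w v = 0 := by
    simpa [hF] using (DFunLike.congr_fun hFd.fderiv v).symm
  set X := A w * conj (fderiv ℂ B w u)
  set Y := conj (B w) * fderiv ℂ A w u + fderiv ℂ G w u
  have hsum : X + Y = 0 := by linear_combination happly u
  have hrot : I * (Y - X) = 0 := by
    have h := happly (I • u)
    simp only [map_smul, smul_eq_mul, map_mul, conj_I] at h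
    linear_combination h
  have hXY : Y = X := sub_eq_zero.1 ((mul_eq_zero.1 hrot).resolve_left I_ne_zero)
  exact ⟨by linear_combination (hsum - hXY) / 2, by linear_combination (hsum + hXY) / 2⟩

theorem mul_conj_eq_zero_and_fderiv_eq_zero_of_euler {E : Type*} [NormedAddCommGroup E]
    [NormedSpace ℂ E] {A B G : E → ℂ} {w u : E} {dA dB : ℕ} (hA : DifferentiableAt ℂ A w)
    (hB : DifferentiableAt ℂ B w) (hG : DifferentiableAt ℂ G w)
    (hAu : fderiv ℂ A w u = dA * A w) (hBu : fderiv ℂ B w u = dB * B w) (hdB : dB ≠ 0)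
    (hF : fderiv ℝ (fun z => A z * conj (B z) + G z) w = 0) :
    A w * conj (B w) = 0 ∧ fderiv ℂ G w u = 0 := by
  obtain ⟨hanti, hlin⟩ := mul_conj_add_fderiv_eq_zero hA hB hG hF u
  rw [hAu] at hlin
  rw [hBu, map_mul, map_natCast, mul_left_comm] at hanti
  have hAB : A w * conj (B w) = 0 := (mul_eq_zero.1 hanti).resolve_left (Nat.cast_ne_zero.2 hdB)
  exact ⟨hAB, by linear_combination hlin - dA * hAB⟩

theorem fderiv_apply_weighted_euler {ι : Type*} [Fintype ι] {P : (ι → ℂ) → ℂ} {w : ι → ℂ}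
    (k : ι → ℕ) (d : ℕ) (hP : DifferentiableAt ℂ P w)
    (hhom : ∀ c : ℂ, c ≠ 0 → P (fun i => c ^ k i * w i) = c ^ d * P w) :
    fderiv ℂ P w (fun i => k i * w i) = d * P w := by
  have hscale : HasDerivAt (fun c : ℂ => fun i => c ^ k i * w i) (fun i => (k i : ℂ) * w i) 1 :=
    hasDerivAt_pi.2 fun i => by simpa using (hasDerivAt_pow (k i) (1 : ℂ)).mul_const (w i)
  have hP' : HasFDerivAt P (fderiv ℂ P w) (fun i => (1 : ℂ) ^ k i * w i) := by
    simpa using hP.hasFDerivAt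
  have hpow : HasDerivAt (fun c : ℂ => c ^ d * P w) (d * P w) 1 := by
    simpa using (hasDerivAt_pow d (1 : ℂ)).mul_const (P w)
  refine (hP'.comp_hasDerivAt (1 : ℂ) hscale).unique (hpow.congr_of_eventuallyEq ?_)
  filter_upwards [eventually_ne_nhds one_ne_zero] with c hc
  exact hhom c hc

def IsWeightedHomogeneousFun (p q d : ℕ) (P : (Fin 2 → ℂ) → ℂ) : Prop :=
  ∀ c : ℂ, c ≠ 0 → ∀ z : Fin 2 → ℂ, P ![c ^ q * z 0, c ^ p * z 1] = c ^ d * P z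

theorem isWeightedHomogeneousFun_pow_add_pow (p q d : ℕ) (γ₁ γ₂ : ℂ) :
    IsWeightedHomogeneousFun p q (p * q * d)
      (fun z => γ₁ * z 0 ^ (p * d) + γ₂ * z 1 ^ (q * d)) := by
  intro c _ z
  simp only [Matrix.cons_val_zero, Matrix.cons_val_one, mul_pow, ← pow_mul]
  ring

theorem IsWeightedHomogeneousFun.fderiv_apply_euler {P : (Fin 2 → ℂ) → ℂ} {w : Fin 2 → ℂ}
    {p q d : ℕ} (hhom : IsWeightedHomogeneousFun p q d P) (hP : DifferentiableAt ℂ P w) :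
    fderiv ℂ P w ![q * w 0, p * w 1] = d * P w := by
  have hscale (c : ℂ) : (fun i => c ^ (![q, p] : Fin 2 → ℕ) i * w i) =
      ![c ^ q * w 0, c ^ p * w 1] := by
    funext i; fin_cases i <;> rfl
  have heuler : (fun i => ((![q, p] : Fin 2 → ℕ) i : ℂ) * w i) = ![q * w 0, p * w 1] := by
    funext i; fin_cases i <;> rfl
  rw [← heuler]
  exact fderiv_apply_weighted_euler ![q, p] d hP fun c hc => by rw [hscale]; exact hhom c hc w

theorem IsWeightedHomogeneousFun.fderiv_const_mul_add_linear_apply_euler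
    {H : (Fin 2 → ℂ) → ℂ} {w : Fin 2 → ℂ} {p q d : ℕ} (hhom : IsWeightedHomogeneousFun p q d H)
    (hH : DifferentiableAt ℂ H w) (t s c₁ c₂ : ℂ) :
    fderiv ℂ (fun z => t * H z + s * (c₁ * z 0 + c₂ * z 1)) w ![q * w 0, p * w 1] =
      t * d * H w + s * (q * c₁ * w 0 + p * c₂ * w 1) := by
  have hL : HasFDerivAt (fun z : Fin 2 → ℂ => c₁ * z 0 + c₂ * z 1)
      (c₁ • ContinuousLinearMap.proj (R := ℂ) (φ := fun _ : Fin 2 => ℂ) 0 +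
        c₂ • ContinuousLinearMap.proj 1) w :=
    ((hasFDerivAt_apply 0 w).const_mul c₁).add ((hasFDerivAt_apply 1 w).const_mul c₂)
  have hG : HasFDerivAt (fun z => t * H z + s * (c₁ * z 0 + c₂ * z 1)) _ w :=
    (hH.hasFDerivAt.const_mul t).add (hL.const_mul s)
  rw [hG.fderiv]
  simp only [add_apply, smul_apply, ContinuousLinearMap.proj_apply, hhom.fderiv_apply_euler hH,
    smul_eq_mul, Matrix.cons_val_zero, Matrix.cons_val_one]
  ring

theorem stmt_17_general (p q m n : ℕ) (hp : 0 < p) (hq : 0 < q) (hn : 0 < n)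
    (f g : MvPolynomial (Fin 2) ℂ)
    (hf : ∀ c : ℂ, c ≠ 0 → ∀ z : Fin 2 → ℂ,
      MvPolynomial.eval ![c ^ q * z 0, c ^ p * z 1] f =
        c ^ (p * q * m) * MvPolynomial.eval z f)
    (hg : ∀ c : ℂ, c ≠ 0 → ∀ z : Fin 2 → ℂ,
      MvPolynomial.eval ![c ^ q * z 0, c ^ p * z 1] g =
        c ^ (p * q * n) * MvPolynomial.eval z g)
    (γ₁ γ₂ : ℂ)
    (h : (Fin 2 → ℂ) → ℂ)
    (hh : h = fun z => γ₁ * z 0 ^ (p * (m - n)) + γ₂ * z 1 ^ (q * (m - n)))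
    (c₁ c₂ : ℂ)
    (l : (Fin 2 → ℂ) → ℂ) (hl : l = fun z => c₁ * z 0 + c₂ * z 1)
    (t s : ℝ)
    (F : (Fin 2 → ℂ) → ℂ)
    (hF : F = fun z =>
      MvPolynomial.eval z f * (starRingEnd ℂ) (MvPolynomial.eval z g) +
        (t : ℂ) * h z + (s : ℂ) * l z) :
    (∀ w : Fin 2 → ℂ, (∀ j : Fin 2, wD F j w = 0 ∧ wDbar F j w = 0) →
      MvPolynomial.eval w f * (starRingEnd ℂ) (MvPolynomial.eval w g) = 0 ∧
      (t : ℂ) * ((p * q * (m - n) : ℕ) : ℂ) * h w +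
        (s : ℂ) * ((q : ℂ) * c₁ * w 0 + (p : ℂ) * c₂ * w 1) = 0) ∧
    (({z : Fin 2 → ℂ | MvPolynomial.eval z f * MvPolynomial.eval z g = 0} ∩
        {z : Fin 2 → ℂ | (t : ℂ) * ((p * q * (m - n) : ℕ) : ℂ) * h z +
          (s : ℂ) * ((q : ℂ) * c₁ * z 0 + (p : ℂ) * c₂ * z 1) = 0}).Finite →
      {w : Fin 2 → ℂ | ∀ j : Fin 2, wD F j w = 0 ∧ wDbar F j w = 0}.Finite) := by
  have critical (w : Fin 2 → ℂ) (hw : ∀ j : Fin 2, wD F j w = 0 ∧ wDbar F j w = 0) :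
      MvPolynomial.eval w f * conj (MvPolynomial.eval w g) = 0 ∧
      (t : ℂ) * ((p * q * (m - n) : ℕ) : ℂ) * h w +
        (s : ℂ) * ((q : ℂ) * c₁ * w 0 + (p : ℂ) * c₂ * w 1) = 0 := by
    have hA := differentiableAt_mvPolynomial_eval f w
    have hB := differentiableAt_mvPolynomial_eval g w
    have hcrit := fderiv_eq_zero_of_wD_eq_zero_of_wDbar_eq_zero hw
    simp only [hF, hh, hl, add_assoc] at hcrit
    obtain ⟨hfg, hG⟩ := mul_conj_eq_zero_and_fderiv_eq_zero_of_euler hA hB (by fun_prop)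
      (IsWeightedHomogeneousFun.fderiv_apply_euler hf hA)
      (IsWeightedHomogeneousFun.fderiv_apply_euler hg hB) (by positivity) hcrit
    have hhom := isWeightedHomogeneousFun_pow_add_pow p q (m - n) γ₁ γ₂
    rw [hhom.fderiv_const_mul_add_linear_apply_euler (by fun_prop)] at hG
    exact ⟨hfg, hh ▸ hG⟩
  refine ⟨critical, fun hfin => hfin.subset fun w hw => ?_⟩
  obtain ⟨hfg, hlin⟩ := critical w hw
  exact ⟨by simpa using hfg, hlin⟩

/-- For `F_{t,s} = fḡ + t·h + s·ℓ`: at any point where all Wirtinger derivatives of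
`F_{t,s}` vanish, `f·conj(g)` vanishes and `t·pq(m−n)·h + s·(qc₁z₁ + pc₂z₂)` vanishes;
hence if the two corresponding zero sets meet in finitely many points, `S₂(F_{t,s})`
is finite. -/
theorem stmt_17 (p q m n : ℕ) (hp : 0 < p) (hq : 0 < q) (hm : 0 < m) (hn : 0 < n)
    (hmn : n < m) (hpq : p ≤ q)
    (f g : MvPolynomial (Fin 2) ℂ)
    (hf : ∀ c : ℂ, c ≠ 0 → ∀ z : Fin 2 → ℂ,
      MvPolynomial.eval ![c ^ q * z 0, c ^ p * z 1] f =
        c ^ (p * q * m) * MvPolynomial.eval z f)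
    (hg : ∀ c : ℂ, c ≠ 0 → ∀ z : Fin 2 → ℂ,
      MvPolynomial.eval ![c ^ q * z 0, c ^ p * z 1] g =
        c ^ (p * q * n) * MvPolynomial.eval z g)
    (γ₁ γ₂ : ℂ) (hγ₁ : γ₁ ≠ 0) (hγ₂ : γ₂ ≠ 0)
    (h : (Fin 2 → ℂ) → ℂ)
    (hh : h = fun z => γ₁ * z 0 ^ (p * (m - n)) + γ₂ * z 1 ^ (q * (m - n)))
    (c₁ c₂ : ℂ) (hc₁ : c₁ ≠ 0) (hc₂ : c₂ ≠ 0)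
    (l : (Fin 2 → ℂ) → ℂ) (hl : l = fun z => c₁ * z 0 + c₂ * z 1)
    (t s : ℝ) (ht : 0 < t) (hs : 0 < s)
    (F : (Fin 2 → ℂ) → ℂ)
    (hF : F = fun z =>
      MvPolynomial.eval z f * (starRingEnd ℂ) (MvPolynomial.eval z g) +
        (t : ℂ) * h z + (s : ℂ) * l z) :
    (∀ w : Fin 2 → ℂ, (∀ j : Fin 2, wD F j w = 0 ∧ wDbar F j w = 0) →
      MvPolynomial.eval w f * (starRingEnd ℂ) (MvPolynomial.eval w g) = 0 ∧
      (t : ℂ) * ((p * q * (m - n) : ℕ) : ℂ) * h w +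
        (s : ℂ) * ((q : ℂ) * c₁ * w 0 + (p : ℂ) * c₂ * w 1) = 0) ∧
    (({z : Fin 2 → ℂ | MvPolynomial.eval z f * MvPolynomial.eval z g = 0} ∩
        {z : Fin 2 → ℂ | (t : ℂ) * ((p * q * (m - n) : ℕ) : ℂ) * h z +
          (s : ℂ) * ((q : ℂ) * c₁ * z 0 + (p : ℂ) * c₂ * z 1) = 0}).Finite →
      {w : Fin 2 → ℂ | ∀ j : Fin 2, wD F j w = 0 ∧ wDbar F j w = 0}.Finite) :=
  stmt_17_general p q m n hp hq hn f g hf hg γ₁ γ₂ h hh c₁ c₂ l hl t s F hF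

end
end
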